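/- arXiv:math/0312131 — 2 statements merged into one kernel-verified Lean document; each statement's English description precedes it below -/
import Mathlib

section
/- Let X be a Banach space, 2 ≤ p ≤ ∞, with dual exponent p′ (1/p + 1/p′ = 1). Suppose l_p is finitely representable in X, and let (a_n) be positive reals with Σ_{n=1}^∞ a_n^{-p′} = ∞. Then there exists a sequence (x_n) in X with ‖x_n‖ = a_n having 0 as a weak cluster point; moreover there is a weight matrix P such that (x_n) is weakly (P,p′)-convergent to 0. -/
/-!
Split `ℕ` into consecutive blocks `[N k, N (k + 1))` on each of which `∑ a m ^ (-p')` is at least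
`k + 1`, and on the `k`-th block put `x m = a m • e m`, where `e` is a `2`-isomorphic copy in `X` of
the unit vector basis of `ℓ_p^{N (k + 1)}`. By `ℓ_p`–`ℓ_{p'}` duality every functional satisfies
`∑ |f (e j)| ^ p' ≤ (2 ‖f‖) ^ p'`, so the average of `|f (x m)| ^ p'` over the `k`-th block with
weights proportional to `a m ^ (-p')` is at most `(2 ‖f‖) ^ p' / (k + 1)`. These block averages form
a weight matrix, and weak `(P, q)`-convergence to `0` for a weight matrix forces `0` to be a weak
cluster point, since the rows of `P` eventually put almost all of their mass beyond any given index.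
-/

open Filter Topology

/-- `x₀` is a weak cluster point of the sequence `x`. -/
def IsWeakClusterPt {X : Type*} [NormedAddCommGroup X] [NormedSpace ℝ X]
    (x₀ : X) (x : ℕ → X) : Prop :=
  ∀ (k : ℕ) (f : Fin k → X →L[ℝ] ℝ) (ε : ℝ), 0 < ε → ∀ N : ℕ,
    ∃ n ≥ N, ∀ i, |f i (x n) - f i x₀| < ε

/-- `ℓ_p` is finitely representable in `X`: for every `ε > 0` and `n` there are unit
vectors `e 0, …, e (n-1)` in `X` which are `(1 ± ε)`-equivalent to the `ℓ_p^n` basis.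
(The `ℓ_p^n` norm of a coefficient vector `b` is expressed via `PiLp p`.) -/
def LpFinitelyRepresentable (p : ENNReal) (X : Type*) [NormedAddCommGroup X]
    [NormedSpace ℝ X] : Prop :=
  ∀ ε : ℝ, 0 < ε → ∀ n : ℕ, ∃ e : Fin n → X, (∀ j, ‖e j‖ = 1) ∧
    ∀ b : Fin n → ℝ,
      (1 - ε) * ‖(WithLp.equiv p (Fin n → ℝ)).symm b‖ ≤ ‖∑ j, b j • e j‖ ∧
      ‖∑ j, b j • e j‖ ≤ (1 + ε) * ‖(WithLp.equiv p (Fin n → ℝ)).symm b‖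

open Finset

lemma exists_strictMono_le_sum_Ico {w : ℕ → ℝ} (hw : ∀ m, 0 ≤ w m) (hdiv : ¬ Summable w)
    (c : ℕ → ℝ) :
    ∃ N : ℕ → ℕ, StrictMono N ∧ N 0 = 0 ∧ ∀ k, c k ≤ ∑ m ∈ Ico (N k) (N (k + 1)), w m := by
  have hT := (not_summable_iff_tendsto_nat_atTop_of_nonneg hw).mp hdiv
  have hstep : ∀ s k, ∃ M, s < M ∧ c k ≤ ∑ m ∈ Ico s M, w m := by
    intro s k
    obtain ⟨M, hM, hsM⟩ :=
      ((hT.eventually_ge_atTop (∑ m ∈ range s, w m + c k)).and (eventually_gt_atTop s)).exists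
    exact ⟨M, hsM, by rw [sum_Ico_eq_sub _ hsM.le]; linarith⟩
  choose next hnext_gt hnext_sum using hstep
  let N : ℕ → ℕ := fun k => Nat.rec 0 (fun k s => next s k) k
  exact ⟨N, strictMono_nat_of_lt_succ fun k => hnext_gt _ _, rfl, fun k => hnext_sum _ _⟩

namespace StrictMono

variable {N : ℕ → ℕ}

lemma exists_mem_Ico (hN : StrictMono N) (h0 : N 0 = 0) (m : ℕ) :
    ∃ k, m ∈ Ico (N k) (N (k + 1)) := by
  have hex : ∃ k, m < N (k + 1) := ⟨m, hN.le_apply.trans_lt (hN (lt_add_one m))⟩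
  refine ⟨Nat.find hex, mem_Ico.mpr ⟨?_, Nat.find_spec hex⟩⟩
  cases h : Nat.find hex with
  | zero => simp [h0]
  | succ k => exact not_lt.mp (Nat.find_min hex (by omega))

lemma eq_of_mem_Ico (hN : StrictMono N) {k l m : ℕ} (hk : m ∈ Ico (N k) (N (k + 1)))
    (hl : m ∈ Ico (N l) (N (l + 1))) : k = l := by
  rw [mem_Ico] at hk hl
  by_contra hne
  rcases Nat.lt_or_gt_of_ne hne with h | h
  · exact (hk.2.trans_le (hN.monotone h)).not_ge hl.1
  · exact (hl.2.trans_le (hN.monotone h)).not_ge hk.1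

end StrictMono

lemma sign_mul_abs_rpow_sub_one_mul (x : ℝ) {s : ℝ} (hs : s ≠ 0) :
    (SignType.sign x : ℝ) * |x| ^ (s - 1) * x = |x| ^ s := by
  rcases eq_or_ne x 0 with rfl | hx
  · simp [Real.zero_rpow hs]
  · rw [mul_right_comm, sign_mul_self, Real.rpow_sub_one (abs_ne_zero.mpr hx),
      mul_div_cancel₀ _ (abs_ne_zero.mpr hx)]

lemma abs_sign_mul_le (x y : ℝ) : |(SignType.sign x : ℝ) * y| ≤ |y| := by
  rw [abs_mul]
  rcases SignType.sign x with _ | _ | _ <;> simp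

lemma sum_abs_rpow_le_of_dotProduct_le {ι : Type*} [Fintype ι] {p : ENNReal} {p' : ℝ} (hp : p ≠ 0)
    (hp' : 0 < p') (hconj : 1 / p.toReal + 1 / p' = 1) {v : ι → ℝ} {K : ℝ} (hK : 0 ≤ K)
    (hv : ∀ b : ι → ℝ, b ⬝ᵥ v ≤ K * ‖WithLp.toLp p b‖) :
    ∑ i, |v i| ^ p' ≤ K ^ p' := by
  -- the vector at which Hölder's inequality `b ⬝ᵥ v ≤ ‖b‖_p ‖v‖_p'` is an equality
  set b : ι → ℝ := fun i => SignType.sign (v i) * |v i| ^ (p' - 1)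
  set A := ∑ i, |v i| ^ p'
  have hbv : b ⬝ᵥ v = A :=
    sum_congr rfl fun i _ => sign_mul_abs_rpow_sub_one_mul (v i) hp'.ne'
  have hb : ∀ i, |b i| ≤ |v i| ^ (p' - 1) := fun i =>
    (abs_sign_mul_le _ _).trans (abs_of_nonneg (by positivity)).le
  rcases eq_or_ne p ⊤ with rfl | hp_top
  · have hp'_one : p' = 1 := by simpa using hconj
    subst hp'_one
    have hb_norm : ‖WithLp.toLp ⊤ b‖ ≤ 1 := by
      rw [PiLp.norm_toLp]
      exact pi_norm_le_iff_of_nonneg zero_le_one |>.mpr fun i => by simpa using hb i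
    calc A = b ⬝ᵥ v := hbv.symm
      _ ≤ K * ‖WithLp.toLp ⊤ b‖ := hv b
      _ ≤ K * 1 := by gcongr
      _ = K ^ (1 : ℝ) := by simp
  · set q := p.toReal
    have hq : 0 < q := ENNReal.toReal_pos hp hp_top
    have hexp : (p' - 1) * q = p' := by
      field_simp at hconj
      linarith
    have hb_norm : ‖WithLp.toLp p b‖ ≤ A ^ (1 / q) := by
      rw [PiLp.norm_eq_sum hq]
      gcongr
      refine sum_le_sum fun i _ => ?_
      calc ‖b i‖ ^ q ≤ (|v i| ^ (p' - 1)) ^ q := by gcongr; exact hb i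
        _ = |v i| ^ p' := by rw [← Real.rpow_mul (abs_nonneg _), hexp]
    have hA : 0 ≤ A := by positivity
    rcases hA.eq_or_lt with hA0 | hA0
    · rw [← hA0]; positivity
    have hA_le : A ^ (1 / p') ≤ K := by
      have : A ≤ K * A ^ (1 / q) :=
        calc A = b ⬝ᵥ v := hbv.symm
          _ ≤ K * ‖WithLp.toLp p b‖ := hv b
          _ ≤ K * A ^ (1 / q) := by gcongr
      rwa [show 1 / p' = 1 - 1 / q by linarith, Real.rpow_sub hA0, Real.rpow_one,
        div_le_iff₀ (by positivity)]
    calc A = (A ^ (1 / p')) ^ p' := by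
          rw [← Real.rpow_mul hA, one_div_mul_cancel hp'.ne', Real.rpow_one]
      _ ≤ K ^ p' := by gcongr

section LpFinitelyRepresentable

variable {X : Type*} [NormedAddCommGroup X] [NormedSpace ℝ X] {p : ENNReal} {p' : ℝ}

lemma sum_abs_apply_rpow_le {ι : Type*} [Fintype ι] (hp : p ≠ 0) (hp' : 0 < p')
    (hconj : 1 / p.toReal + 1 / p' = 1) {e : ι → X} {C : ℝ} (hC : 0 ≤ C)
    (he : ∀ b : ι → ℝ, ‖∑ j, b j • e j‖ ≤ C * ‖(WithLp.equiv p (ι → ℝ)).symm b‖)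
    (f : X →L[ℝ] ℝ) :
    ∑ j, |f (e j)| ^ p' ≤ (C * ‖f‖) ^ p' := by
  refine sum_abs_rpow_le_of_dotProduct_le hp hp' hconj (by positivity) fun b => ?_
  calc b ⬝ᵥ (fun j => f (e j)) = f (∑ j, b j • e j) := by simp [dotProduct, map_sum]
    _ ≤ ‖f‖ * ‖∑ j, b j • e j‖ := (le_abs_self _).trans (f.le_opNorm _)
    _ ≤ ‖f‖ * (C * ‖WithLp.toLp p b‖) := by gcongr; exact he b
    _ = C * ‖f‖ * ‖WithLp.toLp p b‖ := by ring

lemma LpFinitelyRepresentable.exists_seq_sum_abs_apply_rpow_le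
    (hfr : LpFinitelyRepresentable p X) (hp : p ≠ 0) (hp' : 0 < p')
    (hconj : 1 / p.toReal + 1 / p' = 1) (n : ℕ) :
    ∃ e : ℕ → X, (∀ j < n, ‖e j‖ = 1) ∧
      ∀ f : X →L[ℝ] ℝ, ∑ j ∈ range n, |f (e j)| ^ p' ≤ (2 * ‖f‖) ^ p' := by
  obtain ⟨e, he_norm, he⟩ := hfr 1 one_pos n
  refine ⟨fun j => if h : j < n then e ⟨j, h⟩ else 0, fun j hj => by simp [hj, he_norm],
    fun f => ?_⟩
  rw [← Fin.sum_univ_eq_sum_range (fun j => |f (if h : j < n then e ⟨j, h⟩ else 0)| ^ p')]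
  simp only [Fin.is_lt, dif_pos]
  exact sum_abs_apply_rpow_le hp hp' hconj zero_le_two
    (fun b => by simpa [one_add_one_eq_two] using (he b).2) f

end LpFinitelyRepresentable

structure IsWeightMatrix (P : ℕ → ℕ → ℝ) : Prop where
  nonneg : ∀ n m, 0 ≤ P n m
  finite_support : ∀ n, (Function.support (P n)).Finite
  tsum_eq_one : ∀ n, ∑' m, P n m = 1
  tendsto_zero : ∀ m, Tendsto (fun n => P n m) atTop (𝓝 0)

def WeakPqTendstoZero {X : Type*} [NormedAddCommGroup X] [NormedSpace ℝ X]
    (P : ℕ → ℕ → ℝ) (q : ℝ) (x : ℕ → X) : Prop :=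
  ∀ f : X →L[ℝ] ℝ, Tendsto (fun n => ∑' m, P n m * |f (x m)| ^ q) atTop (𝓝 0)

namespace IsWeightMatrix

variable {P : ℕ → ℕ → ℝ}

lemma summable_mul (hP : IsWeightMatrix P) (n : ℕ) (g : ℕ → ℝ) :
    Summable fun m => P n m * g m :=
  summable_of_hasFiniteSupport <|
    (hP.finite_support n).subset (Function.support_mul_subset_left _ _)

lemma tsum_mul_le_tsum_mul (hP : IsWeightMatrix P) (n : ℕ) {g h : ℕ → ℝ} (hgh : ∀ m, g m ≤ h m) :
    ∑' m, P n m * g m ≤ ∑' m, P n m * h m :=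
  (hP.summable_mul n g).tsum_le_tsum (fun m => mul_le_mul_of_nonneg_left (hgh m) (hP.nonneg n m))
    (hP.summable_mul n h)

lemma isWeakClusterPt_zero {X : Type*} [NormedAddCommGroup X] [NormedSpace ℝ X]
    (hP : IsWeightMatrix P) {q : ℝ} (hq : 0 < q) {x : ℕ → X} (hx : WeakPqTendstoZero P q x) :
    IsWeakClusterPt 0 x := by
  intro k f ε hε N₀
  by_contra! hfar
  set g : ℕ → ℝ := fun m => ∑ i, |f i (x m)| ^ q
  have hg : ∀ m, ε ^ q ≤ g m + ε ^ q * if m < N₀ then 1 else 0 := by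
    intro m
    by_cases hm : m < N₀
    · simp only [hm, if_true, mul_one, le_add_iff_nonneg_left]
      positivity
    · obtain ⟨i, hi⟩ := hfar m (not_lt.mp hm)
      simp only [hm, if_false, mul_zero, add_zero, map_zero, sub_zero] at hi ⊢
      calc ε ^ q ≤ |f i (x m)| ^ q := by gcongr
        _ ≤ g m := single_le_sum (f := fun i => |f i (x m)| ^ q) (fun _ _ => by positivity)
            (mem_univ i)
  have hbound : ∀ n, ε ^ q ≤ ∑ i, ∑' m, P n m * |f i (x m)| ^ q
      + ε ^ q * ∑ m ∈ range N₀, P n m := by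
    intro n
    calc ε ^ q = ∑' m, P n m * ε ^ q := by rw [tsum_mul_right, hP.tsum_eq_one, one_mul]
      _ ≤ ∑' m, P n m * (g m + ε ^ q * if m < N₀ then 1 else 0) := hP.tsum_mul_le_tsum_mul n hg
      _ = ∑' m, P n m * g m + ∑' m, P n m * (ε ^ q * if m < N₀ then 1 else 0) := by
        simp only [mul_add]
        exact (hP.summable_mul n _).tsum_add (hP.summable_mul n _)
      _ = _ := by
        congr 1
        · simp only [g, mul_sum]
          exact Summable.tsum_finsetSum fun i _ => hP.summable_mul n _
        · rw [tsum_eq_sum (s := range N₀) fun m hm => by simp [not_lt.mp (mem_range.not.mp hm)],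
            mul_sum]
          exact sum_congr rfl fun m hm => by simp [mem_range.mp hm, mul_comm]
  have hlim : Tendsto (fun n => ∑ i, ∑' m, P n m * |f i (x m)| ^ q
      + ε ^ q * ∑ m ∈ range N₀, P n m) atTop (𝓝 0) := by
    simpa using (tendsto_finsetSum _ fun i _ => hx (f i)).add
      ((tendsto_finsetSum _ fun m _ => hP.tendsto_zero m).const_mul (ε ^ q))
  exact (Real.rpow_pos_of_pos hε q).not_ge (ge_of_tendsto' hlim hbound)

end IsWeightMatrix

noncomputable def blockWeight (N : ℕ → ℕ) (w : ℕ → ℝ) (k m : ℕ) : ℝ :=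
  if m ∈ Ico (N k) (N (k + 1)) then w m / ∑ i ∈ Ico (N k) (N (k + 1)), w i else 0

section blockWeight

variable {N : ℕ → ℕ} {w : ℕ → ℝ}

lemma tsum_blockWeight_mul (k : ℕ) (g : ℕ → ℝ) :
    ∑' m, blockWeight N w k m * g m
      = (∑ m ∈ Ico (N k) (N (k + 1)), w m * g m) / ∑ m ∈ Ico (N k) (N (k + 1)), w m := by
  rw [tsum_eq_sum (s := Ico (N k) (N (k + 1))) fun m hm => by simp [blockWeight, hm], sum_div]
  exact sum_congr rfl fun m hm => by rw [blockWeight, if_pos hm, div_mul_eq_mul_div]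

lemma isWeightMatrix_blockWeight (hN : StrictMono N) (hw : ∀ m, 0 < w m) :
    IsWeightMatrix (blockWeight N w) where
  nonneg k m := by
    unfold blockWeight
    split_ifs
    · exact div_nonneg (hw m).le (sum_nonneg fun i _ => (hw i).le)
    · exact le_rfl
  finite_support k := (Ico (N k) (N (k + 1))).finite_toSet.subset fun m hm => by
    by_contra hm'
    exact hm (if_neg hm')
  tsum_eq_one k := by
    have hS : 0 < ∑ m ∈ Ico (N k) (N (k + 1)), w m :=
      sum_pos (fun m _ => hw m) (nonempty_Ico.mpr (hN (lt_add_one k)))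
    simpa [div_self hS.ne'] using tsum_blockWeight_mul (N := N) (w := w) k 1
  tendsto_zero m := tendsto_const_nhds.congr' <| (eventually_gt_atTop m).mono fun k hk =>
    (if_neg fun hm => (hk.trans_le (hN.le_apply.trans (mem_Ico.mp hm).1)).false).symm

lemma weakPqTendstoZero_blockWeight {X : Type*} [NormedAddCommGroup X] [NormedSpace ℝ X]
    (hw : ∀ m, 0 ≤ w m) (hS : ∀ k : ℕ, (k : ℝ) + 1 ≤ ∑ m ∈ Ico (N k) (N (k + 1)), w m)
    {q : ℝ} {x : ℕ → X}
    (hx : ∀ f : X →L[ℝ] ℝ, ∃ C, ∀ k, ∑ m ∈ Ico (N k) (N (k + 1)), w m * |f (x m)| ^ q ≤ C) :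
    WeakPqTendstoZero (blockWeight N w) q x := by
  intro f
  obtain ⟨C, hC⟩ := hx f
  have hsum_nonneg : ∀ k, 0 ≤ ∑ m ∈ Ico (N k) (N (k + 1)), w m * |f (x m)| ^ q :=
    fun k => sum_nonneg fun m _ => mul_nonneg (hw m) (by positivity)
  refine squeeze_zero (g := fun k : ℕ => C / ((k : ℝ) + 1)) (fun k => ?_) (fun k => ?_) ?_
  · rw [tsum_blockWeight_mul]
    exact div_nonneg (hsum_nonneg k) (sum_nonneg fun m _ => hw m)
  · rw [tsum_blockWeight_mul]
    exact div_le_div₀ ((hsum_nonneg 0).trans (hC 0)) (hC k) (by positivity) (hS k)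
  · exact tendsto_const_nhds.div_atTop (tendsto_natCast_atTop_atTop.atTop_add tendsto_const_nhds)

end blockWeight

lemma rpow_neg_mul_abs_apply_smul_rpow {X : Type*} [NormedAddCommGroup X] [NormedSpace ℝ X]
    {a : ℝ} (ha : 0 < a) (q : ℝ) (f : X →L[ℝ] ℝ) (y : X) :
    a ^ (-q) * |f (a • y)| ^ q = |f y| ^ q := by
  rw [map_smul, smul_eq_mul, abs_mul, abs_of_pos ha, Real.mul_rpow ha.le (abs_nonneg _),
    ← mul_assoc, ← Real.rpow_add ha, neg_add_cancel, Real.rpow_zero, one_mul]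

theorem stmt9_general {X : Type*} [NormedAddCommGroup X] [NormedSpace ℝ X]
    (p : ENNReal) (hp : 2 ≤ p) (p' : ℝ) (hp'1 : 1 ≤ p')
    (hconj : 1 / p.toReal + 1 / p' = 1)
    (hfr : LpFinitelyRepresentable p X)
    (a : ℕ → ℝ) (ha : ∀ n, 0 < a n)
    (hdiv : ¬ Summable (fun n => a n ^ (-p'))) :
    ∃ x : ℕ → X, (∀ n, ‖x n‖ = a n) ∧ IsWeakClusterPt 0 x ∧
      ∃ P : ℕ → ℕ → ℝ, (∀ n m, 0 ≤ P n m) ∧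
        (∀ n, (Function.support (P n)).Finite) ∧
        (∀ n, ∑' m, P n m = 1) ∧
        (∀ m, Tendsto (fun n => P n m) atTop (𝓝 0)) ∧
        ∀ f : X →L[ℝ] ℝ,
          Tendsto (fun n => ∑' m, P n m * |f (x m)| ^ p') atTop (𝓝 0) := by
  have hp0 : p ≠ 0 := (two_pos.trans_le hp).ne'
  have hp' : 0 < p' := by linarith
  have hw : ∀ m, 0 < a m ^ (-p') := fun m => Real.rpow_pos_of_pos (ha m) _
  obtain ⟨N, hN, hN0, hS⟩ :=
    exists_strictMono_le_sum_Ico (fun m => (hw m).le) hdiv fun k => (k : ℝ) + 1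
  choose blk hblk using hN.exists_mem_Ico hN0
  choose E hE_norm hE_sum using fun k =>
    hfr.exists_seq_sum_abs_apply_rpow_le hp0 hp' hconj (N (k + 1))
  set x : ℕ → X := fun m => a m • E (blk m) m
  have hx_norm : ∀ m, ‖x m‖ = a m := fun m => by
    simp [x, norm_smul, hE_norm _ _ (mem_Ico.mp (hblk m)).2, abs_of_pos (ha m)]
  have hx_block : ∀ (f : X →L[ℝ] ℝ) k,
      ∑ m ∈ Ico (N k) (N (k + 1)), a m ^ (-p') * |f (x m)| ^ p' ≤ (2 * ‖f‖) ^ p' := fun f k =>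
    calc ∑ m ∈ Ico (N k) (N (k + 1)), a m ^ (-p') * |f (x m)| ^ p'
        = ∑ m ∈ Ico (N k) (N (k + 1)), |f (E k m)| ^ p' := sum_congr rfl fun m hm => by
          rw [← hN.eq_of_mem_Ico (hblk m) hm, rpow_neg_mul_abs_apply_smul_rpow (ha m)]
      _ ≤ ∑ m ∈ range (N (k + 1)), |f (E k m)| ^ p' :=
          sum_le_sum_of_subset_of_nonneg (range_eq_Ico _ ▸ Ico_subset_Ico_left (Nat.zero_le _))
            fun _ _ _ => by positivity
      _ ≤ (2 * ‖f‖) ^ p' := hE_sum k f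
  have hP := isWeightMatrix_blockWeight hN hw
  have hx := weakPqTendstoZero_blockWeight (fun m => (hw m).le) hS fun f => ⟨_, hx_block f⟩
  exact ⟨x, hx_norm, hP.isWeakClusterPt_zero hp' hx, _, hP.nonneg, hP.finite_support,
    hP.tsum_eq_one, hP.tendsto_zero, hx⟩

theorem stmt9 {X : Type*} [NormedAddCommGroup X] [NormedSpace ℝ X] [CompleteSpace X]
    (p : ENNReal) (hp : 2 ≤ p) (p' : ℝ) (hp'1 : 1 ≤ p') (hp'2 : p' ≤ 2)
    (hconj : 1 / p.toReal + 1 / p' = 1)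
    (hfr : LpFinitelyRepresentable p X)
    (a : ℕ → ℝ) (ha : ∀ n, 0 < a n)
    (hdiv : ¬ Summable (fun n => a n ^ (-p'))) :
    ∃ x : ℕ → X, (∀ n, ‖x n‖ = a n) ∧ IsWeakClusterPt 0 x ∧
      ∃ P : ℕ → ℕ → ℝ, (∀ n m, 0 ≤ P n m) ∧
        (∀ n, (Function.support (P n)).Finite) ∧
        (∀ n, ∑' m, P n m = 1) ∧
        (∀ m, Tendsto (fun n => P n m) atTop (𝓝 0)) ∧
        ∀ f : X →L[ℝ] ℝ,
          Tendsto (fun n => ∑' m, P n m * |f (x m)| ^ p') atTop (𝓝 0) :=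
  stmt9_general p hp p' hp'1 hconj hfr a ha hdiv
end

section
/- Let X be a Banach space and suppose there is a constant C > 0 such that for all n and all x* ∈ X*, Σ_{m=1}^∞ p_{n,m}|x*(x_m)| ≤ C‖x*‖, where for each n the weights p_{n,m} are supported on an interval (m₁(n), m₂(n)) with Σ_m p_{n,m} = 1. If X has M-cotype p with constant C₁, then for every n, 1 ≤ (C/C₁)·(Σ_{m=m₁(n)+1}^{m₂(n)} ‖x_m‖^{-p′})^{1/p′}, where p′ is the dual exponent of p. -/
/-!
Every signed sum `∑ γₘ pₙₘ xₘ` has norm at most `C`, by testing it against functionals, so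
M-cotype gives `C₁ ‖(pₙₘ ‖xₘ‖)ₘ‖_p ≤ C`. Hölder's inequality for `1 = ∑ (pₙₘ ‖xₘ‖) ‖xₘ‖⁻¹`
then bounds `1` by `‖(pₙₘ ‖xₘ‖)ₘ‖_p ‖(‖xₘ‖⁻¹)ₘ‖_p'`.
-/

def HasMCotype (X : Type*) [NormedAddCommGroup X] [Module ℝ X] (p C₁ : ℝ) : Prop :=
  ∀ (k : ℕ) (y : Fin k → X), ∃ γ : Fin k → ℝ,
    (∀ i, γ i = 1 ∨ γ i = -1) ∧ C₁ * (∑ i, ‖y i‖ ^ p) ^ (1 / p) ≤ ‖∑ i, γ i • y i‖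

section

variable {X : Type*} [NormedAddCommGroup X] [NormedSpace ℝ X] {ι : Type*}

theorem HasMCotype.exists_signs {p C₁ : ℝ} (h : HasMCotype X p C₁) [Fintype ι] (y : ι → X) :
    ∃ γ : ι → ℝ, (∀ i, γ i = 1 ∨ γ i = -1) ∧
      C₁ * (∑ i, ‖y i‖ ^ p) ^ (1 / p) ≤ ‖∑ i, γ i • y i‖ := by
  let e := Fintype.equivFin ι
  obtain ⟨γ, hγ, hineq⟩ := h _ (y ∘ e.symm)
  refine ⟨γ ∘ e, fun i => hγ (e i), ?_⟩
  rw [← e.symm.sum_comp, ← e.symm.sum_comp]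
  simpa using hineq

theorem HasMCotype.exists_signs_finset {p C₁ : ℝ} (h : HasMCotype X p C₁) (S : Finset ι)
    (y : ι → X) :
    ∃ γ : ι → ℝ, (∀ i, γ i = 1 ∨ γ i = -1) ∧
      C₁ * (∑ i ∈ S, ‖y i‖ ^ p) ^ (1 / p) ≤ ‖∑ i ∈ S, γ i • y i‖ := by
  classical
  obtain ⟨γ, hγ, hineq⟩ := h.exists_signs fun i : S => y i
  refine ⟨fun i => if hi : i ∈ S then γ ⟨i, hi⟩ else 1, fun i => ?_, ?_⟩
  · dsimp only
    split_ifs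
    exacts [hγ _, Or.inl rfl]
  · rw [← Finset.sum_coe_sort S, ← Finset.sum_coe_sort S]
    simpa using hineq

theorem norm_sum_smul_le_of_weighted_dual_bound (S : Finset ι) (w : ι → ℝ)
    (hw : ∀ i ∈ S, 0 ≤ w i) (x : ι → X) {C : ℝ} (hC : 0 ≤ C)
    (hbound : ∀ f : X →L[ℝ] ℝ, ∑ i ∈ S, w i * |f (x i)| ≤ C * ‖f‖)
    (γ : ι → ℝ) (hγ : ∀ i ∈ S, |γ i| ≤ 1) :
    ‖∑ i ∈ S, γ i • w i • x i‖ ≤ C := by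
  refine NormedSpace.norm_le_dual_bound ℝ _ hC fun f => ?_
  calc ‖f (∑ i ∈ S, γ i • w i • x i)‖ = |∑ i ∈ S, γ i * (w i * f (x i))| := by
        simp [Real.norm_eq_abs]
    _ ≤ ∑ i ∈ S, |γ i * (w i * f (x i))| := Finset.abs_sum_le_sum_abs _ _
    _ ≤ ∑ i ∈ S, w i * |f (x i)| := by
        refine Finset.sum_le_sum fun i hi => ?_
        rw [abs_mul, abs_mul, abs_of_nonneg (hw i hi)]
        exact mul_le_of_le_one_left (mul_nonneg (hw i hi) (abs_nonneg _)) (hγ i hi)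
    _ ≤ C * ‖f‖ := hbound f

theorem one_le_Lp_mul_Lq_neg_of_sum_eq_one {p q : ℝ} (hpq : p.HolderConjugate q)
    (S : Finset ι) (w a : ι → ℝ) (hw : ∀ i ∈ S, 0 ≤ w i) (hw1 : ∑ i ∈ S, w i = 1)
    (ha : ∀ i ∈ S, 0 < a i) :
    1 ≤ (∑ i ∈ S, (w i * a i) ^ p) ^ (1 / p) * (∑ i ∈ S, a i ^ (-q)) ^ (1 / q) := by
  have hinv : ∑ i ∈ S, a i ^ (-q) = ∑ i ∈ S, (a i)⁻¹ ^ q :=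
    Finset.sum_congr rfl fun i hi => by
      rw [Real.inv_rpow (ha i hi).le, Real.rpow_neg (ha i hi).le]
  calc (1 : ℝ) = ∑ i ∈ S, w i * a i * (a i)⁻¹ := by
        rw [← hw1]
        exact Finset.sum_congr rfl fun i hi => by field_simp [(ha i hi).ne']
    _ ≤ _ := by
        rw [hinv]
        exact Real.inner_le_Lp_mul_Lq_of_nonneg S hpq
          (fun i hi => mul_nonneg (hw i hi) (ha i hi).le) fun i hi => inv_nonneg.2 (ha i hi).le

end

theorem stmt13_general {X : Type*} [NormedAddCommGroup X] [NormedSpace ℝ X]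
    (p p' : ℝ) (hp : 2 ≤ p) (hconj : 1 / p + 1 / p' = 1)
    (x : ℕ → X) (hx0 : ∀ m, x m ≠ 0)
    (P : ℕ → ℕ → ℝ) (m₁ m₂ : ℕ → ℕ)
    (hP0 : ∀ n m, 0 ≤ P n m)
    (hPsum : ∀ n, ∑ m ∈ Finset.Ioc (m₁ n) (m₂ n), P n m = 1)
    (C : ℝ) (hC : 0 < C)
    (hbound : ∀ (n : ℕ) (f : X →L[ℝ] ℝ),
      ∑ m ∈ Finset.Ioc (m₁ n) (m₂ n), P n m * |f (x m)| ≤ C * ‖f‖)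
    (C₁ : ℝ) (hC₁ : 0 < C₁)
    (hcot : ∀ (k : ℕ) (y : Fin k → X), ∃ γ : Fin k → ℝ,
      (∀ i, γ i = 1 ∨ γ i = -1) ∧
      C₁ * (∑ i, ‖y i‖ ^ p) ^ (1 / p) ≤ ‖∑ i, γ i • y i‖) :
    ∀ n, 1 ≤ (C / C₁) *
      (∑ m ∈ Finset.Ioc (m₁ n) (m₂ n), ‖x m‖ ^ (-p')) ^ (1 / p') := by
  intro n
  set S := Finset.Ioc (m₁ n) (m₂ n)
  have hpq : p.HolderConjugate p' :=
    Real.holderConjugate_iff.2 ⟨by linarith, by simpa [one_div] using hconj⟩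
  obtain ⟨γ, hγ, hcotγ⟩ :=
    HasMCotype.exists_signs_finset hcot S fun m => P n m • x m
  have hsigned : ‖∑ m ∈ S, γ m • P n m • x m‖ ≤ C :=
    norm_sum_smul_le_of_weighted_dual_bound S (P n) (fun m _ => hP0 n m) x hC.le (hbound n) γ
      fun m _ => by rcases hγ m with h | h <;> simp [h]
  have hnorms : ∑ m ∈ S, ‖P n m • x m‖ ^ p = ∑ m ∈ S, (P n m * ‖x m‖) ^ p := by
    simp [norm_smul, abs_of_nonneg (hP0 n _)]
  have hLp : (∑ m ∈ S, (P n m * ‖x m‖) ^ p) ^ (1 / p) ≤ C / C₁ :=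
    (le_div_iff₀' hC₁).2 (hnorms ▸ hcotγ.trans hsigned)
  calc (1 : ℝ) ≤ (∑ m ∈ S, (P n m * ‖x m‖) ^ p) ^ (1 / p) *
        (∑ m ∈ S, ‖x m‖ ^ (-p')) ^ (1 / p') :=
        one_le_Lp_mul_Lq_neg_of_sum_eq_one hpq S (P n) (‖x ·‖) (fun m _ => hP0 n m) (hPsum n)
          fun m _ => norm_pos_iff.2 (hx0 m)
    _ ≤ (C / C₁) * (∑ m ∈ S, ‖x m‖ ^ (-p')) ^ (1 / p') :=
        mul_le_mul_of_nonneg_right hLp (by positivity)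

theorem stmt13 {X : Type*} [NormedAddCommGroup X] [NormedSpace ℝ X]
    (p p' : ℝ) (hp : 2 ≤ p) (hconj : 1 / p + 1 / p' = 1)
    (x : ℕ → X) (hx0 : ∀ m, x m ≠ 0)
    (P : ℕ → ℕ → ℝ) (m₁ m₂ : ℕ → ℕ)
    (hP0 : ∀ n m, 0 ≤ P n m)
    (hPsupp : ∀ n m, m ∉ Finset.Ioc (m₁ n) (m₂ n) → P n m = 0)
    (hPsum : ∀ n, ∑ m ∈ Finset.Ioc (m₁ n) (m₂ n), P n m = 1)
    (C : ℝ) (hC : 0 < C)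
    (hbound : ∀ (n : ℕ) (f : X →L[ℝ] ℝ),
      ∑ m ∈ Finset.Ioc (m₁ n) (m₂ n), P n m * |f (x m)| ≤ C * ‖f‖)
    (C₁ : ℝ) (hC₁ : 0 < C₁)
    (hcot : ∀ (k : ℕ) (y : Fin k → X), ∃ γ : Fin k → ℝ,
      (∀ i, γ i = 1 ∨ γ i = -1) ∧
      C₁ * (∑ i, ‖y i‖ ^ p) ^ (1 / p) ≤ ‖∑ i, γ i • y i‖) :
    ∀ n, 1 ≤ (C / C₁) *
      (∑ m ∈ Finset.Ioc (m₁ n) (m₂ n), ‖x m‖ ^ (-p')) ^ (1 / p') :=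
  stmt13_general p p' hp hconj x hx0 P m₁ m₂ hP0 hPsum C hC hbound C₁ hC₁ hcot
end
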